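/- Consider the McKean–Vlasov problem (MV) with feedback function f(x) = −log(1 − x) and α > 0, where solutions are required to take values in [0,1). Suppose the law ν₀ of X₀ has a density V₀ with ‖V₀‖_∞ := ess sup V₀ < α⁻¹. If L and L̄ are two solutions associated with the same X₀, Z and α, then for every t ≥ 0 such that max(L_t, L̄_t) < 1 − α‖V₀‖_∞, one has L_s = L̄_s for all s ∈ [0, t]. -/

import Mathlib

open MeasureTheory ProbabilityTheory Filter Set Function
open scoped ENNReal

noncomputable section

variable {Ω : Type*} [MeasureSpace Ω]

/-- The event that the particle `X_s = X₀ + Z_s − α f(L_s)` has reached `(-∞, 0]` by time `t`,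
for the feedback function `f(x) = −log(1−x)`. -/
def hitByLog (X0 : Ω → ℝ) (Z : ℝ → Ω → ℝ) (α : ℝ) (L : ℝ → ℝ) (t : ℝ) : Set Ω :=
  {ω | ∃ s ∈ Set.Icc (0 : ℝ) t, X0 ω + Z s ω - α * (-Real.log (1 - L s)) ≤ 0}

/-- A solution of the McKean--Vlasov problem (MV) with feedback function `f(x) = −log(1−x)`,
taking values in `[0,1)`. -/
def IsMVSolutionLog (X0 : Ω → ℝ) (Z : ℝ → Ω → ℝ) (α : ℝ) (L : ℝ → ℝ) : Prop :=
  MonotoneOn L (Set.Ici 0) ∧ L 0 = 0 ∧ (∀ t, 0 ≤ t → L t ∈ Set.Ico (0 : ℝ) 1) ∧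
  (∀ t, 0 ≤ t → ContinuousWithinAt L (Set.Ici t) t) ∧
  (∀ t, 0 ≤ t → L t = ((ℙ : Measure Ω) (hitByLog X0 Z α L t)).toReal)

/-- Lipschitz-type bound for `f(x) = -log(1-x)` on `[0,c]`. -/
lemma negLog_lip {x y c : ℝ} (hxy : x ≤ y) (hy : y ≤ c) (hc : c < 1) :
    (-Real.log (1 - y)) - (-Real.log (1 - x)) ≤ (1 - c)⁻¹ * (y - x) := by
  have h1y : (0:ℝ) < 1 - y := by linarith
  have h1x : (0:ℝ) < 1 - x := by linarith
  have h1c : (0:ℝ) < 1 - c := by linarith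
  have key : (-Real.log (1 - y)) - (-Real.log (1 - x)) = Real.log ((1-x)/(1-y)) := by
    rw [Real.log_div (ne_of_gt h1x) (ne_of_gt h1y)]; ring
  rw [key]
  have hlog : Real.log ((1-x)/(1-y)) ≤ (1-x)/(1-y) - 1 :=
    Real.log_le_sub_one_of_pos (div_pos h1x h1y)
  have h2 : (1-x)/(1-y) - 1 = (y - x)/(1-y) := by field_simp; ring
  have h3 : (y - x)/(1-y) ≤ (y - x)/(1-c) := by gcongr <;> linarith
  calc Real.log ((1-x)/(1-y)) ≤ (y - x)/(1-y) := by rw [← h2]; exact hlog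
    _ ≤ (y - x)/(1-c) := h3
    _ = (1-c)⁻¹ * (y - x) := by rw [div_eq_inv_mul]

/-- Monotonicity of `f(x) = -log(1-x)`. -/
lemma negLog_mono {x y : ℝ} (hxy : x ≤ y) (hy : y < 1) :
    -Real.log (1 - x) ≤ -Real.log (1 - y) := by
  have : Real.log (1 - y) ≤ Real.log (1 - x) := Real.log_le_log (by linarith) (by linarith)
  linarith

/-- Band probability bound via independence and bounded density. -/
lemma band_bound (hprob : IsProbabilityMeasure (ℙ : Measure Ω))
    (X0 : Ω → ℝ) (hX0meas : Measurable X0)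
    (Z : ℝ → Ω → ℝ) (hZmeas : ∀ t, Measurable (Z t))
    (hindep : IndepFun X0 (fun ω => fun t => Z t ω) ℙ)
    (V₀ : ℝ → ℝ)
    (hdens : Measure.map X0 (ℙ : Measure Ω)
      = volume.withDensity fun x => ENNReal.ofReal (V₀ x))
    (ψ : (ℝ → ℝ) → ℝ) (hψ : Measurable ψ) (Δ : ℝ) :
    (ℙ : Measure Ω) {ω | ψ (fun s => Z s ω) ≤ X0 ω ∧ X0 ω ≤ ψ (fun s => Z s ω) + Δ}
      ≤ eLpNorm V₀ ⊤ volume * ENNReal.ofReal Δ := by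
  set C := eLpNorm V₀ ⊤ volume with hC
  have hIcc : ∀ a : ℝ,
      (volume.withDensity fun x => ENNReal.ofReal (V₀ x)) (Icc a (a + Δ))
        ≤ C * ENNReal.ofReal Δ := by
    intro a
    rw [withDensity_apply _ measurableSet_Icc]
    have hae : ∀ᵐ x ∂(volume : Measure ℝ), ENNReal.ofReal (V₀ x) ≤ C := by
      have h := ENNReal.ae_le_essSup (μ := (volume : Measure ℝ)) (fun x => (‖V₀ x‖₊ : ℝ≥0∞))
      filter_upwards [h] with x hx
      refine le_trans (Real.ofReal_le_enorm (V₀ x)) ?_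
      rwa [hC, eLpNorm_exponent_top, eLpNormEssSup]
    calc ∫⁻ x in Icc a (a + Δ), ENNReal.ofReal (V₀ x) ∂volume
        ≤ ∫⁻ _ in Icc a (a + Δ), C ∂volume :=
          lintegral_mono_ae (ae_restrict_of_ae hae)
      _ = C * volume (Icc a (a + Δ)) := setLIntegral_const _ _
      _ = C * ENNReal.ofReal Δ := by rw [Real.volume_Icc, add_sub_cancel_left]
  set W : Ω → (ℝ → ℝ) := fun ω s => Z s ω with hWdef
  have hW : Measurable W := measurable_pi_lambda _ hZmeas
  have hmap : (ℙ : Measure Ω).map (fun ω => (X0 ω, W ω))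
      = ((ℙ : Measure Ω).map X0).prod ((ℙ : Measure Ω).map W) :=
    (indepFun_iff_map_prod_eq_prod_map_map hX0meas.aemeasurable hW.aemeasurable).mp hindep
  set E : Set (ℝ × (ℝ → ℝ)) := {p | ψ p.2 ≤ p.1 ∧ p.1 ≤ ψ p.2 + Δ} with hEdef
  have hE : MeasurableSet E :=
    (measurableSet_le (hψ.comp measurable_snd) measurable_fst).inter
      (measurableSet_le measurable_fst ((hψ.comp measurable_snd).add_const Δ))
  have hpre : {ω | ψ (fun s => Z s ω) ≤ X0 ω ∧ X0 ω ≤ ψ (fun s => Z s ω) + Δ}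
      = (fun ω => (X0 ω, W ω)) ⁻¹' E := rfl
  rw [hpre, ← Measure.map_apply (hX0meas.prodMk hW) hE, hmap]
  haveI : IsProbabilityMeasure ((ℙ : Measure Ω).map W) :=
    Measure.isProbabilityMeasure_map hW.aemeasurable
  rw [Measure.prod_apply_symm hE]
  have hslice : ∀ z : ℝ → ℝ, ((fun x : ℝ => (x, z)) ⁻¹' E) = Icc (ψ z) (ψ z + Δ) := by
    intro z; ext x; simp [hEdef, Set.mem_Icc]
  calc ∫⁻ z, ((ℙ : Measure Ω).map X0) ((fun x => (x, z)) ⁻¹' E) ∂((ℙ : Measure Ω).map W)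
      ≤ ∫⁻ _, C * ENNReal.ofReal Δ ∂((ℙ : Measure Ω).map W) := by
        refine lintegral_mono fun z => ?_
        rw [hslice z, hdens]; exact hIcc (ψ z)
    _ = C * ENNReal.ofReal Δ := by rw [lintegral_const, measure_univ, mul_one]

/-- One-sided comparison of two solutions. -/
lemma key_ineq (hprob : IsProbabilityMeasure (ℙ : Measure Ω))
    (X0 : Ω → ℝ) (hX0meas : Measurable X0)
    (Z : ℝ → Ω → ℝ) (hZmeas : ∀ t, Measurable (Z t))
    (hZcont : ∀ ω, Continuous fun t => Z t ω)
    (hindep : IndepFun X0 (fun ω => fun t => Z t ω) ℙ)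
    (α : ℝ) (hα : 0 < α)
    (V₀ : ℝ → ℝ)
    (hdens : Measure.map X0 (ℙ : Measure Ω)
      = volume.withDensity fun x => ENNReal.ofReal (V₀ x))
    (hCfin : eLpNorm V₀ ⊤ volume ≠ ⊤)
    (L Lbar : ℝ → ℝ)
    (hL : IsMVSolutionLog X0 Z α L) (hLbar : IsMVSolutionLog X0 Z α Lbar)
    (u : ℝ) (hu : 0 ≤ u) (Δ : ℝ) (hΔ0 : 0 ≤ Δ)
    (hΔ : ∀ s ∈ Set.Icc (0 : ℝ) u,
      α * ((-Real.log (1 - L s)) - (-Real.log (1 - Lbar s))) ≤ Δ) :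
    L u ≤ Lbar u + (eLpNorm V₀ ⊤ volume).toReal * Δ := by
  classical
  obtain ⟨hLbarMono, hLbar0, hLbarIco, hLbarCont, hLbarFix⟩ := hLbar
  set term : Option {q : ℚ // 0 ≤ (q : ℝ) ∧ (q : ℝ) < u} → (ℝ → ℝ) → ℝ :=
    fun i z => match i with
      | none => α * (-Real.log (1 - Lbar u)) - z u
      | some q => α * (-Real.log (1 - Lbar (q : ℝ))) - z (q : ℝ) with hterm
  set ψ : (ℝ → ℝ) → ℝ := fun z => ⨆ i, term i z with hψdef
  have hψ : Measurable ψ := by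
    apply Measurable.iSup
    intro i
    match i with
    | none => exact measurable_const.sub (measurable_pi_apply u)
    | some q => exact measurable_const.sub (measurable_pi_apply (q : ℝ))
  set B : Set Ω :=
    {ω | ψ (fun s => Z s ω) ≤ X0 ω ∧ X0 ω ≤ ψ (fun s => Z s ω) + Δ} with hBdef
  have hsub : hitByLog X0 Z α L u ⊆ hitByLog X0 Z α Lbar u ∪ B := by
    intro ω hωA
    by_cases hωAbar : ω ∈ hitByLog X0 Z α Lbar u
    · exact Or.inl hωAbar
    refine Or.inr ?_
    have hnot : ∀ s ∈ Set.Icc (0 : ℝ) u,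
        α * (-Real.log (1 - Lbar s)) - Z s ω < X0 ω := by
      intro s hs
      by_contra hcon
      exact hωAbar ⟨s, hs, by linarith⟩
    have hub : ∀ i, term i (fun s => Z s ω) ≤ X0 ω := by
      intro i
      match i with
      | none => exact (hnot u ⟨hu, le_refl u⟩).le
      | some ⟨q, hq0, hqu⟩ => exact (hnot (q : ℝ) ⟨hq0, hqu.le⟩).le
    have hbdd : BddAbove (Set.range fun i => term i (fun s => Z s ω)) := by
      refine ⟨X0 ω, ?_⟩
      rintro _ ⟨i, rfl⟩
      exact hub i
    have h1 : ψ (fun s => Z s ω) ≤ X0 ω := ciSup_le hub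
    obtain ⟨s, hs, hXle⟩ := hωA
    have hXle' : X0 ω ≤ α * (-Real.log (1 - L s)) - Z s ω := by linarith
    have hfs : α * (-Real.log (1 - L s)) - Z s ω
        ≤ (α * (-Real.log (1 - Lbar s)) - Z s ω) + Δ := by
      have := hΔ s hs
      linarith
    have claim : α * (-Real.log (1 - Lbar s)) - Z s ω ≤ ψ (fun r => Z r ω) := by
      rcases eq_or_lt_of_le hs.2 with heq | hlt
      · rw [heq]
        exact le_ciSup hbdd none
      · refine le_of_forall_pos_le_add ?_
        intro ε hε
        obtain ⟨δ, hδpos, hδ⟩ :=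
          Metric.continuousAt_iff.mp ((hZcont ω).continuousAt (x := s)) ε hε
        obtain ⟨q, hq1, hq2⟩ := exists_rat_btwn (lt_min (lt_add_of_pos_right s hδpos) hlt)
        have hq0 : 0 ≤ (q : ℝ) := le_trans hs.1 hq1.le
        have hqu : (q : ℝ) < u := lt_of_lt_of_le hq2 (min_le_right _ _)
        have hqd : dist (q : ℝ) s < δ := by
          rw [Real.dist_eq, abs_of_pos (by linarith)]
          have := lt_of_lt_of_le hq2 (min_le_left _ _)
          linarith
        have hZq : |Z (q : ℝ) ω - Z s ω| < ε := by
          have := hδ hqd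
          rwa [Real.dist_eq] at this
        have habs := abs_lt.mp hZq
        have hmon : (-Real.log (1 - Lbar s)) ≤ (-Real.log (1 - Lbar (q : ℝ))) :=
          negLog_mono (hLbarMono hs.1 hq0 hq1.le) (hLbarIco (q : ℝ) hq0).2
        have hmon' : α * (-Real.log (1 - Lbar s)) ≤ α * (-Real.log (1 - Lbar (q : ℝ))) :=
          mul_le_mul_of_nonneg_left hmon hα.le
        have hterm_le : term (some ⟨q, hq0, hqu⟩) (fun r => Z r ω) ≤ ψ (fun r => Z r ω) :=
          le_ciSup hbdd (some ⟨q, hq0, hqu⟩)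
        have heq2 : term (some ⟨q, hq0, hqu⟩) (fun r => Z r ω)
            = α * (-Real.log (1 - Lbar (q : ℝ))) - Z (q : ℝ) ω := rfl
        rw [heq2] at hterm_le
        linarith
    refine ⟨h1, ?_⟩
    linarith
  have hPB : (ℙ : Measure Ω) B ≤ eLpNorm V₀ ⊤ volume * ENNReal.ofReal Δ :=
    band_bound hprob X0 hX0meas Z hZmeas hindep V₀ hdens ψ hψ Δ
  have hfinAbar : (ℙ : Measure Ω) (hitByLog X0 Z α Lbar u) ≠ ⊤ := measure_ne_top _ _
  have hfinB : (ℙ : Measure Ω) B ≠ ⊤ := measure_ne_top _ _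
  have hchain : (ℙ : Measure Ω) (hitByLog X0 Z α L u)
      ≤ (ℙ : Measure Ω) (hitByLog X0 Z α Lbar u) + (ℙ : Measure Ω) B :=
    (measure_mono hsub).trans (measure_union_le _ _)
  have hLu := (hL.2.2.2.2) u hu
  have hLbaru := hLbarFix u hu
  rw [hLu, hLbaru]
  have h1 : ((ℙ : Measure Ω) (hitByLog X0 Z α L u)).toReal
      ≤ ((ℙ : Measure Ω) (hitByLog X0 Z α Lbar u)).toReal + ((ℙ : Measure Ω) B).toReal := by
    rw [← ENNReal.toReal_add hfinAbar hfinB]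
    exact ENNReal.toReal_mono (ENNReal.add_ne_top.mpr ⟨hfinAbar, hfinB⟩) hchain
  have h2 : ((ℙ : Measure Ω) B).toReal ≤ (eLpNorm V₀ ⊤ volume).toReal * Δ := by
    have hne : eLpNorm V₀ ⊤ volume * ENNReal.ofReal Δ ≠ ⊤ :=
      ENNReal.mul_ne_top hCfin ENNReal.ofReal_ne_top
    have := ENNReal.toReal_mono hne hPB
    rwa [ENNReal.toReal_mul, ENNReal.toReal_ofReal hΔ0] at this
  linarith

/-- **(Corollary 2.4.)** For the feedback `f(x) = −log(1−x)` with `α > 0` and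
`‖V₀‖_∞ < α⁻¹`, two solutions of (MV) agree on `[0, t]` whenever
`max(L_t, L̄_t) < 1 − α ‖V₀‖_∞`. -/
theorem mv_log_feedback_local_uniqueness
    (hprob : IsProbabilityMeasure (ℙ : Measure Ω))
    (X0 : Ω → ℝ) (hX0meas : Measurable X0) (hX0pos : ∀ ω, 0 < X0 ω)
    (Z : ℝ → Ω → ℝ) (hZmeas : ∀ t, Measurable (Z t))
    (hZcont : ∀ ω, Continuous fun t => Z t ω)
    (hindep : IndepFun X0 (fun ω => fun t => Z t ω) ℙ)
    (α : ℝ) (hα : 0 < α)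
    (V₀ : ℝ → ℝ) (hV₀meas : Measurable V₀) (hV₀nonneg : ∀ x, 0 ≤ V₀ x)
    (hV₀supp : ∀ x ≤ (0 : ℝ), V₀ x = 0)
    (hdens : Measure.map X0 (ℙ : Measure Ω)
      = volume.withDensity fun x => ENNReal.ofReal (V₀ x))
    (hV₀small : eLpNorm V₀ ⊤ volume < ENNReal.ofReal α⁻¹)
    (L Lbar : ℝ → ℝ)
    (hL : IsMVSolutionLog X0 Z α L) (hLbar : IsMVSolutionLog X0 Z α Lbar)
    (t : ℝ) (ht : 0 ≤ t)
    (hbound : max (L t) (Lbar t) < 1 - α * (eLpNorm V₀ ⊤ volume).toReal) :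
    ∀ s ∈ Set.Icc (0 : ℝ) t, L s = Lbar s := by
  classical
  set β := (eLpNorm V₀ ⊤ volume).toReal with hβ
  set c := max (L t) (Lbar t) with hc
  have hβ0 : 0 ≤ β := ENNReal.toReal_nonneg
  have hαβ : 0 ≤ α * β := mul_nonneg hα.le hβ0
  have h1c : 0 < 1 - c := by
    have : c < 1 - α * β := hbound
    linarith
  have hc1 : c < 1 := by linarith
  have hCfin : eLpNorm V₀ ⊤ volume ≠ ⊤ := hV₀small.ne_top
  haveI : Nonempty ↥(Set.Icc (0:ℝ) t) := ⟨⟨0, le_refl 0, ht⟩⟩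
  set M := ⨆ s : Set.Icc (0:ℝ) t, |L (s : ℝ) - Lbar (s : ℝ)| with hM
  have hMbdd : BddAbove (Set.range fun s : Set.Icc (0:ℝ) t => |L (s : ℝ) - Lbar (s : ℝ)|) := by
    refine ⟨2, ?_⟩
    rintro _ ⟨s, rfl⟩
    have h1 := hL.2.2.1 (s : ℝ) s.2.1
    have h2 := hLbar.2.2.1 (s : ℝ) s.2.1
    rw [Set.mem_Ico] at h1 h2
    rw [abs_sub_le_iff]
    constructor <;> linarith [h1.1, h1.2, h2.1, h2.2]
  have hle : ∀ s ∈ Set.Icc (0:ℝ) t, |L s - Lbar s| ≤ M := fun s hs =>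
    le_ciSup hMbdd (⟨s, hs⟩ : ↥(Set.Icc (0:ℝ) t))
  have hM0 : 0 ≤ M := le_trans (abs_nonneg _) (hle 0 ⟨le_refl 0, ht⟩)
  set Δ := α * ((1 - c)⁻¹ * M) with hΔdef
  have hKpos : 0 < (1 - c)⁻¹ := inv_pos.mpr h1c
  have hΔ0 : 0 ≤ Δ := mul_nonneg hα.le (mul_nonneg hKpos.le hM0)
  -- generic estimate, applied in both orders
  have hEst : ∀ P Q : ℝ → ℝ, MonotoneOn P (Set.Ici 0) →
      (∀ r, 0 ≤ r → P r ∈ Set.Ico (0:ℝ) 1) → (∀ r, 0 ≤ r → Q r ∈ Set.Ico (0:ℝ) 1) →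
      P t ≤ c → (∀ s ∈ Set.Icc (0:ℝ) t, |P s - Q s| ≤ M) →
      ∀ s ∈ Set.Icc (0:ℝ) t,
        α * ((-Real.log (1 - P s)) - (-Real.log (1 - Q s))) ≤ Δ := by
    intro P Q hPmono hPIco hQIco hPt hPQ s hs
    have hPs := hPIco s hs.1
    have hQs := hQIco s hs.1
    rw [Set.mem_Ico] at hPs hQs
    rcases le_total (P s) (Q s) with hcase | hcase
    · have := negLog_mono hcase hQs.2
      have hnonpos : (-Real.log (1 - P s)) - (-Real.log (1 - Q s)) ≤ 0 := by linarith
      calc α * ((-Real.log (1 - P s)) - (-Real.log (1 - Q s))) ≤ α * 0 :=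
            mul_le_mul_of_nonneg_left hnonpos hα.le
        _ = 0 := mul_zero α
        _ ≤ Δ := hΔ0
    · have hPsc : P s ≤ c := le_trans (hPmono hs.1 (Set.mem_Ici.mpr ht) hs.2) hPt
      have hlip := negLog_lip (x := Q s) (y := P s) (c := c) hcase hPsc hc1
      have habs : P s - Q s ≤ |P s - Q s| := le_abs_self _
      have hM' := hPQ s hs
      have h4 : (-Real.log (1 - P s)) - (-Real.log (1 - Q s)) ≤ (1 - c)⁻¹ * M := by
        calc (-Real.log (1 - P s)) - (-Real.log (1 - Q s)) ≤ (1 - c)⁻¹ * (P s - Q s) := hlip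
          _ ≤ (1 - c)⁻¹ * M := by
              apply mul_le_mul_of_nonneg_left _ hKpos.le
              linarith
      calc α * ((-Real.log (1 - P s)) - (-Real.log (1 - Q s)))
          ≤ α * ((1 - c)⁻¹ * M) := mul_le_mul_of_nonneg_left h4 hα.le
        _ = Δ := rfl
  have hLt : L t ≤ c := le_max_left _ _
  have hLbart : Lbar t ≤ c := le_max_right _ _
  have hPQ1 : ∀ s ∈ Set.Icc (0:ℝ) t, |L s - Lbar s| ≤ M := hle
  have hPQ2 : ∀ s ∈ Set.Icc (0:ℝ) t, |Lbar s - L s| ≤ M := by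
    intro s hs; rw [abs_sub_comm]; exact hle s hs
  have hone : ∀ u ∈ Set.Icc (0:ℝ) t, L u ≤ Lbar u + β * Δ := by
    intro u hu
    exact key_ineq hprob X0 hX0meas Z hZmeas hZcont hindep α hα V₀ hdens hCfin
      L Lbar hL hLbar u hu.1 Δ hΔ0
      (fun s hs => hEst L Lbar hL.1 hL.2.2.1 hLbar.2.2.1 hLt hPQ1 s ⟨hs.1, hs.2.trans hu.2⟩)
  have htwo : ∀ u ∈ Set.Icc (0:ℝ) t, Lbar u ≤ L u + β * Δ := by
    intro u hu
    exact key_ineq hprob X0 hX0meas Z hZmeas hZcont hindep α hα V₀ hdens hCfin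
      Lbar L hLbar hL u hu.1 Δ hΔ0
      (fun s hs => hEst Lbar L hLbar.1 hLbar.2.2.1 hL.2.2.1 hLbart hPQ2 s ⟨hs.1, hs.2.trans hu.2⟩)
  have habs : ∀ u ∈ Set.Icc (0:ℝ) t, |L u - Lbar u| ≤ β * Δ := by
    intro u hu
    rw [abs_sub_le_iff]
    exact ⟨by linarith [hone u hu], by linarith [htwo u hu]⟩
  have hMle : M ≤ β * Δ := ciSup_le fun s => habs (s : ℝ) s.2
  have hκ : α * β * (1 - c)⁻¹ < 1 := by
    have h1 : α * β < 1 - c := by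
      have : c < 1 - α * β := hbound
      linarith
    have := mul_lt_mul_of_pos_right h1 hKpos
    rwa [mul_inv_cancel₀ (ne_of_gt h1c)] at this
  have hMle' : M ≤ (α * β * (1 - c)⁻¹) * M := by
    calc M ≤ β * Δ := hMle
      _ = (α * β * (1 - c)⁻¹) * M := by rw [hΔdef]; ring
  have hM_zero : M ≤ 0 := by nlinarith [hκ, hM0, hMle']
  intro s hs
  have := hle s hs
  have : |L s - Lbar s| ≤ 0 := le_trans this hM_zero
  have h0 : L s - Lbar s = 0 := abs_eq_zero.mp (le_antisymm this (abs_nonneg _))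
  linarith
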